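/- Every proper two-sided ideal of the Jordan plane R = k⟨x,y⟩/(xy - yx - y²) that is nonzero contains a nonzero polynomial in y. -/

import Mathlib

/-- The defining relation of the Jordan plane: `x * y = y * x + y * y`. -/
inductive JordanRel (k : Type) [Field k] : FreeAlgebra k Bool → FreeAlgebra k Bool → Prop
  | rel : JordanRel k (FreeAlgebra.ι k true * FreeAlgebra.ι k false)
      (FreeAlgebra.ι k false * FreeAlgebra.ι k true + FreeAlgebra.ι k false * FreeAlgebra.ι k false)

/-- The Jordan plane `R = k⟨x,y⟩/(xy - yx - y²)`. -/
abbrev JordanPlane (k : Type) [Field k] := RingQuot (JordanRel k)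

/-- The generator `x` of the Jordan plane. -/
noncomputable def jx (k : Type) [Field k] : JordanPlane k :=
  RingQuot.mkAlgHom k (JordanRel k) (FreeAlgebra.ι k true)

/-- The generator `y` of the Jordan plane. -/
noncomputable def jy (k : Type) [Field k] : JordanPlane k :=
  RingQuot.mkAlgHom k (JordanRel k) (FreeAlgebra.ι k false)

/-!
Every element of the Jordan plane is a normal-ordered sum `∑ pⱼ(y) xʲ`, and the inner derivation
`⁅y, ·⁆` lowers the `x`-degree by one: since `⁅y, x⁆ = -y²`, it sends `p(y) xⁿ + (lower terms)` to
`-n y² p(y) xⁿ⁻¹ + (lower terms)`. So if `a ∈ I` has `x`-degree `n` and leading coefficient `p`,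
then `⁅y, ·⁆ⁿ a = (-1)ⁿ n! y²ⁿ p(y)` lies in `I`. It is nonzero because `k` has characteristic zero
and `k[y] → R` is injective, as the representation `x ↦ t² d/dt`, `y ↦ t` of `R` on `k[t]` shows.
-/

theorem TwoSidedIdeal.iterate_lie_mem {R : Type*} [Ring R] (I : TwoSidedIdeal R) (b : R) {a : R}
    (ha : a ∈ I) (n : ℕ) : (⁅b, ·⁆)^[n] a ∈ I := by
  induction n with
  | zero => exact ha
  | succ n ih =>
    rw [Function.iterate_succ_apply', Ring.lie_def]
    exact I.sub_mem (I.mul_mem_left _ _ ih) (I.mul_mem_right _ _ ih)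

namespace JordanPlane

open Polynomial

-- for `lie_add` and `lie_sum` on the ring commutator `⁅a, b⁆ = a * b - b * a`
attribute [local instance] LieRing.ofAssociativeRing

variable {k : Type} [Field k]

theorem jx_mul_jy : jx k * jy k = jy k * jx k + jy k * jy k := by
  simpa only [jx, jy, map_mul, map_add] using RingQuot.mkAlgHom_rel k (JordanRel.rel (k := k))

theorem lie_jy_jx : ⁅jy k, jx k⁆ = -(jy k ^ 2) := by
  rw [Ring.lie_def, jx_mul_jy, sq]
  abel

theorem commute_jy_aeval (p : k[X]) : Commute (jy k) (aeval (jy k) p) := by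
  simpa using (Commute.all X p).map (aeval (jy k))

theorem jx_mul_aeval_jy (p : k[X]) :
    jx k * aeval (jy k) p = aeval (jy k) p * jx k + aeval (jy k) (X ^ 2 * derivative p) := by
  induction p using Polynomial.induction_on with
  | C a => simp [Algebra.commutes]
  | add p q hp hq =>
    simp only [map_add, mul_add, add_mul, hp, hq]
    abel
  | monomial n a ih =>
    rw [pow_succ, ← mul_assoc, derivative_mul, derivative_X, mul_one]
    generalize C a * X ^ n = P at ih ⊢
    have hP : jy k ^ 2 * aeval (jy k) P = aeval (jy k) P * jy k ^ 2 :=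
      ((commute_jy_aeval P).pow_left 2).eq
    simp only [map_mul, map_add, map_pow, aeval_X] at ih ⊢
    rw [← mul_assoc, ih, add_mul, mul_assoc (aeval (jy k) P), jx_mul_jy, mul_add (jy k ^ 2), hP]
    noncomm_ring

noncomputable def ofNormalOrder : k[X][X] →+ JordanPlane k :=
  eval₂AddMonoidHom (aeval (jy k)).toRingHom (jx k)

theorem ofNormalOrder_monomial (n : ℕ) (p : k[X]) :
    ofNormalOrder (monomial n p) = aeval (jy k) p * jx k ^ n := by
  simp [ofNormalOrder]

theorem ofNormalOrder_C (p : k[X]) : ofNormalOrder (C p) = aeval (jy k) p := by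
  simp [ofNormalOrder]

theorem ofNormalOrder_eq_sum_range {F : k[X][X]} {N : ℕ} (hF : F.natDegree < N) :
    ofNormalOrder F = ∑ j ∈ Finset.range N, aeval (jy k) (F.coeff j) * jx k ^ j :=
  eval₂_eq_sum_range' _ hF _

theorem ofNormalOrder_C_mul (p : k[X]) (G : k[X][X]) :
    ofNormalOrder (C p * G) = aeval (jy k) p * ofNormalOrder G := by
  induction G using Polynomial.induction_on' with
  | add f g hf hg => rw [mul_add, map_add, map_add, hf, hg, mul_add]
  | monomial n q =>
    rw [C_mul_monomial, ofNormalOrder_monomial, ofNormalOrder_monomial, map_mul, mul_assoc]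

theorem exists_jx_mul_ofNormalOrder_eq (G : k[X][X]) :
    ∃ D : k[X][X], (∀ i, D.coeff i = X ^ 2 * derivative (G.coeff i)) ∧
      jx k * ofNormalOrder G = ofNormalOrder (X * G + D) := by
  induction G using Polynomial.induction_on' with
  | add f g hf hg =>
    obtain ⟨Df, hDf, ef⟩ := hf
    obtain ⟨Dg, hDg, eg⟩ := hg
    refine ⟨Df + Dg, fun i => by simp [hDf, hDg, mul_add], ?_⟩
    rw [map_add, mul_add, ef, eg, ← map_add]
    congr 1
    ring
  | monomial n p =>
    refine ⟨monomial n (X ^ 2 * derivative p), fun i => ?_, ?_⟩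
    · simp only [coeff_monomial]
      split_ifs <;> simp
    · rw [X_mul_monomial, map_add, ofNormalOrder_monomial, ofNormalOrder_monomial,
        ofNormalOrder_monomial, ← mul_assoc, jx_mul_aeval_jy, add_mul, mul_assoc, ← pow_succ']

theorem ofNormalOrder_surjective : Function.Surjective (ofNormalOrder (k := k)) := by
  intro a
  obtain ⟨z, rfl⟩ := RingQuot.mkAlgHom_surjective k (JordanRel k) a
  suffices h : ∀ G, ∃ H, RingQuot.mkAlgHom k (JordanRel k) z * ofNormalOrder G = ofNormalOrder H by
    obtain ⟨H, hH⟩ := h 1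
    exact ⟨H, by rw [← hH, show ofNormalOrder (1 : k[X][X]) = 1 by simp [ofNormalOrder], mul_one]⟩
  induction z using FreeAlgebra.induction with
  | grade0 r =>
    intro G
    exact ⟨C (C r) * G, by rw [ofNormalOrder_C_mul, aeval_C, AlgHom.commutes]⟩
  | grade1 b =>
    intro G
    cases b with
    | true =>
      obtain ⟨D, -, hD⟩ := exists_jx_mul_ofNormalOrder_eq G
      exact ⟨X * G + D, hD⟩
    | false => exact ⟨C X * G, by rw [ofNormalOrder_C_mul, aeval_X]; rfl⟩
  | mul a b ha hb =>
    intro G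
    obtain ⟨H, hH⟩ := hb G
    obtain ⟨H', hH'⟩ := ha H
    exact ⟨H', by rw [map_mul, mul_assoc, hH, hH']⟩
  | add a b ha hb =>
    intro G
    obtain ⟨H, hH⟩ := ha G
    obtain ⟨H', hH'⟩ := hb G
    exact ⟨H + H', by rw [map_add, add_mul, hH, hH', map_add]⟩

theorem lie_jy_aeval_jy (p : k[X]) : ⁅jy k, aeval (jy k) p⁆ = 0 :=
  commute_iff_lie_eq.1 (commute_jy_aeval p)

theorem lie_jy_aeval_mul (p : k[X]) (b : JordanPlane k) :
    ⁅jy k, aeval (jy k) p * b⁆ = aeval (jy k) p * ⁅jy k, b⁆ := by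
  simp only [Ring.lie_def, mul_sub, ← mul_assoc, (commute_jy_aeval p).eq]

theorem exists_lie_jy_jx_pow_succ (j : ℕ) :
    ∃ K : k[X][X], K.natDegree ≤ j ∧ K.coeff j = -(((j : k[X]) + 1) * X ^ 2) ∧
      ⁅jy k, jx k ^ (j + 1)⁆ = ofNormalOrder K := by
  induction j with
  | zero =>
    refine ⟨C (-X ^ 2), by simp, by rw [coeff_C_zero]; ring, ?_⟩
    rw [zero_add, pow_one, lie_jy_jx, ofNormalOrder_C, map_neg, map_pow, aeval_X]
  | succ j ih =>
    obtain ⟨K, hKdeg, hKj, hK⟩ := ih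
    obtain ⟨D, hD, hxK⟩ := exists_jx_mul_ofNormalOrder_eq K
    have hKcoeff : ∀ i, j < i → K.coeff i = 0 := natDegree_le_iff_coeff_eq_zero.1 hKdeg
    have hDdeg : D.natDegree ≤ j := natDegree_le_iff_coeff_eq_zero.2 fun i hi => by
      rw [hD, hKcoeff i hi, derivative_zero, mul_zero]
    refine ⟨monomial (j + 1) (-X ^ 2) + (X * K + D), ?_, ?_, ?_⟩
    · refine natDegree_add_le_of_degree_le (natDegree_monomial_le _) ?_
      refine natDegree_add_le_of_degree_le ?_ (hDdeg.trans j.le_succ)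
      exact natDegree_mul_le.trans (by rw [natDegree_X]; omega)
    · rw [coeff_add, coeff_add, coeff_monomial_same, coeff_X_mul, hKj, hD,
        hKcoeff (j + 1) j.lt_succ_self, derivative_zero]
      push_cast
      ring
    · have hlie (b : JordanPlane k) :
          ⁅jy k, jx k * b⁆ = ⁅jy k, jx k⁆ * b + jx k * ⁅jy k, b⁆ := by
        simp only [Ring.lie_def, mul_sub, sub_mul, mul_assoc]
        abel
      rw [pow_succ', hlie, hK, hxK, lie_jy_jx, map_add _ (monomial _ _), ofNormalOrder_monomial,
        map_neg, map_pow, aeval_X]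

theorem exists_lie_jy_ofNormalOrder {n : ℕ} {F : k[X][X]} (hF : F.natDegree ≤ n + 1) :
    ∃ H : k[X][X], H.natDegree ≤ n ∧ H.coeff n = -(((n : k[X]) + 1) * X ^ 2 * F.coeff (n + 1)) ∧
      ⁅jy k, ofNormalOrder F⁆ = ofNormalOrder H := by
  choose K hKdeg hKcoeff hK using exists_lie_jy_jx_pow_succ (k := k)
  refine ⟨∑ j ∈ Finset.range (n + 1), C (F.coeff (j + 1)) * K j, ?_, ?_, ?_⟩
  · refine natDegree_sum_le_of_forall_le _ _ fun j hj => ?_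
    exact natDegree_C_mul_le _ _ |>.trans ((hKdeg j).trans (Finset.mem_range_succ_iff.1 hj))
  · rw [finsetSum_coeff, Finset.sum_range_succ, coeff_C_mul, hKcoeff, Finset.sum_eq_zero]
    · ring
    intro j hj
    rw [coeff_C_mul, coeff_eq_zero_of_natDegree_lt ((hKdeg j).trans_lt
      (Finset.mem_range.1 hj)), mul_zero]
  · rw [ofNormalOrder_eq_sum_range (Nat.lt_succ_of_le hF), Finset.sum_range_succ', map_sum]
    simp only [lie_add, lie_sum, lie_jy_aeval_mul, pow_zero, mul_one, lie_jy_aeval_jy,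
      ofNormalOrder_C_mul, hK, add_zero]

theorem iterate_lie_jy_ofNormalOrder {n : ℕ} {F : k[X][X]} (hF : F.natDegree ≤ n) :
    (⁅jy k, ·⁆)^[n] (ofNormalOrder F) =
      aeval (jy k) ((-1) ^ n * (n.factorial : k[X]) * X ^ (2 * n) * F.coeff n) := by
  induction n generalizing F with
  | zero =>
    conv_lhs => rw [eq_C_of_natDegree_le_zero hF]
    simp [ofNormalOrder_C]
  | succ n ih =>
    obtain ⟨H, hHdeg, hHn, hH⟩ := exists_lie_jy_ofNormalOrder hF
    rw [Function.iterate_succ_apply, hH, ih hHdeg, hHn]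
    congr 1
    push_cast [Nat.factorial_succ]
    ring

noncomputable def toEnd : JordanPlane k →ₐ[k] Module.End k k[X] :=
  RingQuot.liftAlgHom k ⟨FreeAlgebra.lift k fun b =>
      if b then Algebra.lmul k k[X] (X ^ 2) * derivative else Algebra.lmul k k[X] X, by
    rintro _ _ ⟨⟩
    refine LinearMap.ext fun p => ?_
    simp [derivative_mul]
    ring⟩

theorem toEnd_jy : toEnd (jy k) = Algebra.lmul k k[X] X := by
  simp [toEnd, jy]

theorem aeval_jy_injective : Function.Injective (aeval (jy k) : k[X] → JordanPlane k) := by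
  refine Function.LeftInverse.injective (g := fun a => toEnd a 1) fun p => ?_
  change toEnd (aeval (jy k) p) 1 = p
  rw [← aeval_algHom_apply, toEnd_jy, aeval_algHom_apply, aeval_X_left_apply]
  simp

end JordanPlane

open Polynomial JordanPlane

theorem nonzero_proper_ideal_contains_poly_in_y_general (k : Type) [Field k] [CharZero k]
    (I : TwoSidedIdeal (JordanPlane k)) (hne : I ≠ ⊥) :
    ∃ p : Polynomial k,
      Polynomial.aeval (jy k) p ∈ I ∧ Polynomial.aeval (jy k) p ≠ 0 := by
  obtain ⟨a, haI, ha⟩ : ∃ a ∈ I, a ≠ 0 := by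
    by_contra! h
    exact hne (eq_bot_iff.2 fun a haI => (TwoSidedIdeal.mem_bot _).2 (h a haI))
  obtain ⟨F, rfl⟩ := ofNormalOrder_surjective a
  have hF : F ≠ 0 := by
    rintro rfl
    exact ha (map_zero _)
  refine ⟨(-1) ^ F.natDegree * (F.natDegree.factorial : k[X]) * X ^ (2 * F.natDegree) *
    F.coeff F.natDegree, ?_, ?_⟩
  · rw [← iterate_lie_jy_ofNormalOrder le_rfl]
    exact I.iterate_lie_mem _ haI _
  · rw [Ne, map_eq_zero_iff _ aeval_jy_injective]
    simp [hF, Nat.factorial_ne_zero]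

theorem nonzero_proper_ideal_contains_poly_in_y (k : Type) [Field k] [CharZero k]
    (I : TwoSidedIdeal (JordanPlane k)) (hne : I ≠ ⊥) (hproper : I ≠ ⊤) :
    ∃ p : Polynomial k,
      Polynomial.aeval (jy k) p ∈ I ∧ Polynomial.aeval (jy k) p ≠ 0 :=
  nonzero_proper_ideal_contains_poly_in_y_general k I hne
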